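/- For every integer n ≥ 5, the characteristic polynomial of the signless Laplacian matrix of the graph B₁(n−5,0,0,0,0) equals (x−1)^{n−4} (x−3) (x³ − (n+3)x² + 3n·x − 8). -/

import Mathlib

open Polynomial

/-- The signless Laplacian matrix `Q(G) = D(G) + A(G)` of a simple graph, over `ℝ`. -/
noncomputable def signlessLaplacian {V : Type*} [Fintype V] [DecidableEq V]
    (G : SimpleGraph V) : Matrix V V ℝ :=
  letI := Classical.decRel G.Adj
  G.degMatrix ℝ + G.adjMatrix ℝ

/-- The signless Laplacian characteristic polynomial `Q_G(x) = det (x I - Q(G))`. -/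
noncomputable def Qpoly {V : Type*} [Fintype V] [DecidableEq V] (G : SimpleGraph V) :
    Polynomial ℝ :=
  (signlessLaplacian G).charpoly

/-- The signless Laplacian coefficients: `φ_i(G)` is `(-1)^i` times the coefficient of
`x^(n-i)` in the signless Laplacian characteristic polynomial. -/
noncomputable def phi {V : Type*} [Fintype V] [DecidableEq V] (G : SimpleGraph V) (i : ℕ) : ℝ :=
  (-1 : ℝ) ^ i * (Qpoly G).coeff (Fintype.card V - i)
/-- Attach `p i` pendant vertices at each vertex `i` of a base graph `H` on `Fin k`. -/
def addPendants {k : ℕ} (H : SimpleGraph (Fin k)) (p : Fin k → ℕ) :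
    SimpleGraph ((Fin k) ⊕ (Σ i : Fin k, Fin (p i))) where
  Adj x y :=
    match x, y with
    | Sum.inl a, Sum.inl b => H.Adj a b
    | Sum.inl a, Sum.inr b => a = b.1
    | Sum.inr a, Sum.inl b => a.1 = b
    | Sum.inr _, Sum.inr _ => False
  symm := by
    constructor
    rintro (a | a) (b | b) h
    · exact H.adj_symm h
    · exact h.symm
    · exact h.symm
    · exact h
  loopless := by
    constructor
    rintro (a | a) h
    · exact H.irrefl h
    · exact h
/-- The base of `B₁`: two triangles `x u v` and `x w z` (`x,u,v,w,z = 0,1,2,3,4`)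
sharing exactly the vertex `x`. -/
def B1base : SimpleGraph (Fin 5) :=
  SimpleGraph.fromRel (fun a b =>
    (a = 0 ∧ b = 1) ∨ (a = 0 ∧ b = 2) ∨ (a = 1 ∧ b = 2) ∨
    (a = 0 ∧ b = 3) ∨ (a = 0 ∧ b = 4) ∨ (a = 3 ∧ b = 4))

/-- `B₁(a,b,c,d,e)`: the base `B₁` with `a,b,c,d,e` pendant vertices attached at
`x,u,v,w,z` respectively. -/
def B1 (a b c d e : ℕ) := addPendants B1base ![a, b, c, d, e]

/-!
Order the vertices of `addPendants H p` as the base vertices followed by the pendant ones. Then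
`x I - Q` is a block matrix whose pendant block is `(x - 1) I` and whose off-diagonal blocks are
minus the pendant incidence matrix `P`, with `P Pᵀ = diag p`. For `x ≠ 1` the Schur complement
formula gives `(x - 1)^(∑ p) det (x I - Q(H) - diag (p x / (x - 1)))`, a `5 × 5` determinant for
`B₁`. Both sides of the theorem are polynomials that agree off `x = 1`, hence everywhere.
-/

open Matrix

theorem det_fromBlocks_algebraMap₂₂ {m n α : Type*} [Fintype m] [Fintype n] [DecidableEq m]
    [DecidableEq n] [Field α] {c : α} (hc : c ≠ 0) (A : Matrix m m α) (B : Matrix m n α)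
    (C : Matrix n m α) :
    (fromBlocks A B C (algebraMap α _ c)).det = c ^ Fintype.card n * (A - c⁻¹ • (B * C)).det := by
  let := invertibleOfNonzero hc
  let := Invertible.map (algebraMap α (Matrix n n α)) c
  rw [det_fromBlocks₂₂, ← map_invOf, invOf_eq_inv, Algebra.algebraMap_eq_smul_one,
    Algebra.algebraMap_eq_smul_one, det_smul, det_one, mul_one, Matrix.mul_smul, Matrix.mul_one,
    Matrix.smul_mul]

instance B1base.instDecidableRelAdj : DecidableRel B1base.Adj := fun a b =>
  decidable_of_iff' _ (SimpleGraph.fromRel_adj _ a b)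

theorem signlessLaplacian_apply {V : Type*} [Fintype V] [DecidableEq V] (G : SimpleGraph V)
    [DecidableRel G.Adj] (a b : V) :
    signlessLaplacian G a b =
      (if a = b then (G.degree a : ℝ) else 0) + if G.Adj a b then 1 else 0 := by
  unfold signlessLaplacian
  convert (rfl : (G.degMatrix ℝ + G.adjMatrix ℝ) a b = _)
  simp [SimpleGraph.degMatrix, Matrix.diagonal_apply]

theorem B1base_degree (a : Fin 5) : B1base.degree a = if a = 0 then 4 else 2 := by
  revert a; decide

theorem signlessLaplacian_B1base :
    signlessLaplacian B1base =
      !![4, 1, 1, 1, 1; 1, 2, 1, 0, 0; 1, 1, 2, 0, 0; 1, 0, 0, 2, 1; 1, 0, 0, 1, 2] := by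
  ext i j
  rw [signlessLaplacian_apply]
  fin_cases i <;> fin_cases j <;> simp [B1base_degree] <;> decide

section addPendants

variable {k : ℕ} (H : SimpleGraph (Fin k)) (p : Fin k → ℕ)

@[simp]
theorem addPendants_adj_inl_inl (a b : Fin k) :
    (addPendants H p).Adj (.inl a) (.inl b) ↔ H.Adj a b := Iff.rfl

@[simp]
theorem addPendants_adj_inl_inr (a : Fin k) (b : Σ i, Fin (p i)) :
    (addPendants H p).Adj (.inl a) (.inr b) ↔ a = b.1 := Iff.rfl

@[simp]
theorem addPendants_adj_inr_inl (a : Σ i, Fin (p i)) (b : Fin k) :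
    (addPendants H p).Adj (.inr a) (.inl b) ↔ a.1 = b := Iff.rfl

@[simp]
theorem addPendants_adj_inr_inr (a b : Σ i, Fin (p i)) :
    ¬(addPendants H p).Adj (.inr a) (.inr b) :=
  id

theorem addPendants_degree_inl [DecidableRel H.Adj] [DecidableRel (addPendants H p).Adj]
    (a : Fin k) : (addPendants H p).degree (Sum.inl a) = H.degree a + p a := by
  simp only [← SimpleGraph.card_neighborFinset_eq_degree, SimpleGraph.neighborFinset_eq_filter,
    Finset.card_filter]
  rw [Fintype.sum_sum_type, ← Finset.univ_sigma_univ, Finset.sum_sigma]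
  simp

theorem addPendants_degree_inr [DecidableRel (addPendants H p).Adj] (b : Σ i, Fin (p i)) :
    (addPendants H p).degree (Sum.inr b) = 1 := by
  simp only [← SimpleGraph.card_neighborFinset_eq_degree, SimpleGraph.neighborFinset_eq_filter,
    Finset.card_filter, Fintype.sum_sum_type]
  simp

def pendantIncidence : Matrix (Fin k) (Σ i, Fin (p i)) ℝ :=
  of fun a b => if a = b.1 then 1 else 0

theorem signlessLaplacian_addPendants :
    signlessLaplacian (addPendants H p) =
      fromBlocks (signlessLaplacian H + diagonal fun a => (p a : ℝ)) (pendantIncidence p)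
        (pendantIncidence p)ᵀ 1 := by
  classical
  ext (a | b) (a' | b') <;>
    simp [signlessLaplacian_apply, addPendants_degree_inl, addPendants_degree_inr, pendantIncidence,
      diagonal_apply, one_apply, eq_comm]
  split_ifs <;> ring

theorem pendantIncidence_mul_transpose :
    pendantIncidence p * (pendantIncidence p)ᵀ = diagonal fun a => (p a : ℝ) := by
  ext a a'
  simp [pendantIncidence, mul_apply, diagonal_apply, ← Finset.univ_sigma_univ, Finset.sum_sigma]
  split_ifs with h <;> simp [h]

theorem eval_Qpoly_addPendants {r : ℝ} (hr : r ≠ 1) :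
    (Qpoly (addPendants H p)).eval r = (r - 1) ^ (∑ a, p a) *
      (scalar _ r - signlessLaplacian H - diagonal fun a => p a * r / (r - 1)).det := by
  have hr' : r - 1 ≠ 0 := sub_ne_zero.2 hr
  have hblocks : scalar _ r - signlessLaplacian (addPendants H p) =
      fromBlocks (scalar _ r - (signlessLaplacian H + diagonal fun a => (p a : ℝ)))
        (-pendantIncidence p) (-(pendantIncidence p)ᵀ) (algebraMap ℝ _ (r - 1)) := by
    rw [signlessLaplacian_addPendants, algebraMap_eq_diagonal]
    ext (a | b) (a' | b') <;> simp [diagonal_apply, one_apply, sub_ite]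
    split_ifs <;> ring
  have hschur : scalar _ r - (signlessLaplacian H + diagonal fun a => (p a : ℝ)) -
      (r - 1)⁻¹ • (-pendantIncidence p * -(pendantIncidence p)ᵀ) =
      scalar _ r - signlessLaplacian H - diagonal fun a => p a * r / (r - 1) := by
    rw [Matrix.neg_mul, Matrix.mul_neg, neg_neg, pendantIncidence_mul_transpose]
    ext a b
    by_cases hab : a = b
    · subst hab
      simp
      field_simp
      ring
    · simp [hab]
  rw [Qpoly, eval_charpoly, hblocks, det_fromBlocks_algebraMap₂₂ hr', hschur, Fintype.card_sigma]
  simp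

end addPendants

theorem det_B1base (r t : ℝ) :
    (scalar _ r - signlessLaplacian B1base - diagonal ![t, 0, 0, 0, 0]).det =
      (r - 3) * (r - 1) ^ 2 * ((r - 4 - t) * (r - 3) - 4) := by
  have h : scalar _ r - signlessLaplacian B1base - diagonal ![t, 0, 0, 0, 0] =
      !![r - 4 - t, -1, -1, -1, -1; -1, r - 2, -1, 0, 0; -1, -1, r - 2, 0, 0;
        -1, 0, 0, r - 2, -1; -1, 0, 0, -1, r - 2] := by
    rw [signlessLaplacian_B1base]
    ext i j
    fin_cases i <;> fin_cases j <;> simp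
  rw [h]
  simp [det_succ_row_zero, Fin.sum_univ_succ, Fin.succAbove]
  ring

theorem eval_Qpoly_B1 (m : ℕ) {r : ℝ} (hr : r ≠ 1) :
    (Qpoly (B1 m 0 0 0 0)).eval r =
      (r - 1) ^ (m + 1) * (r - 3) * (r ^ 3 - (m + 8) * r ^ 2 + 3 * (m + 5) * r - 8) := by
  have hsum : ∑ a, ![m, 0, 0, 0, 0] a = m := by simp [Fin.sum_univ_five]
  have hdiag : (fun a => (![m, 0, 0, 0, 0] a : ℝ) * r / (r - 1)) =
      ![m * r / (r - 1), 0, 0, 0, 0] := by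
    ext a
    fin_cases a <;> simp
  rw [B1, eval_Qpoly_addPendants _ _ hr, hsum, hdiag, det_B1base]
  have hr' : r - 1 ≠ 0 := sub_ne_zero.2 hr
  field_simp
  ring

/-- the signless Laplacian characteristic polynomial of `B₁(n−5,0,0,0,0)`. -/
theorem Qpoly_B1 (n : ℕ) (hn : 5 ≤ n) :
    Qpoly (B1 (n - 5) 0 0 0 0) =
      (X - 1) ^ (n - 4) * (X - 3) *
        (X ^ 3 - ((n : ℝ[X]) + 3) * X ^ 2 + 3 * (n : ℝ[X]) * X - 8) := by
  obtain ⟨m, rfl⟩ : ∃ m, n = m + 5 := ⟨n - 5, by omega⟩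
  refine eq_of_infinite_eval_eq _ _ ((Set.finite_singleton 1).infinite_compl.mono fun r hr => ?_)
  rw [Set.mem_ofPred_eq, Nat.add_sub_cancel, show m + 5 - 4 = m + 1 by omega, eval_Qpoly_B1 m hr]
  simp only [eval_mul, eval_pow, eval_sub, eval_add, eval_X, eval_one, eval_ofNat, eval_natCast]
  push_cast
  ring
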